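/- Let a be an order-m (m ≥ 2) dimension-N hypermatrix with nonnegative real entries such that for every i : Fin N the off-diagonal row sum Σ_{t : t(0) = i, t not constant} a(t) is at most Δ and the diagonal entry a(i, i, …, i) is at most r. Then every real eigenvalue λ of a (with real eigenvector x ≠ 0) satisfies |λ| ≤ Δ + r. In particular, every eigenvalue of the e-adjacency hypermatrix of a hb-graph of m-range r, whose off-diagonal row sums equal the m-degrees of the original and null vertices and whose diagonal entries are at most r, satisfies |λ| ≤ max(Δ, Δ*) + r where Δ and Δ* are the maximal m-degrees of original and null vertices. -/
import Mathlib


/-- For an order-`m` (`m ≥ 2`) dimension-`N` hypermatrix `a` with nonnegative real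
entries such that, for every index `i`, the off-diagonal row sum
`Σ_{t : t(0) = i, t nonconstant} a(t)` is at most `Δ` and the diagonal entry
`a(i, i, …, i)` is at most `R`, every real eigenvalue `λ` of `a` (with real
eigenvector `x ≠ 0`) satisfies `|λ| ≤ Δ + R`.  (In particular, for the
e-adjacency hypermatrix of a hb-graph of m-range `r`, whose off-diagonal row sums
are the m-degrees of the original and null vertices and whose diagonal entries
are at most `r`, this gives `|λ| ≤ max(Δ, Δ*) + r`.) -/
theorem stmt14 (N m : ℕ) (hm : 2 ≤ m)
    (a : (Fin m → Fin N) → ℝ) (ha : ∀ t, 0 ≤ a t)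
    (Δ R : ℝ)
    (hoff : ∀ i : Fin N,
      ∑ t ∈ Finset.univ.filter
          (fun t : Fin m → Fin N => t ⟨0, by omega⟩ = i ∧ t ≠ fun _ => i),
        a t ≤ Δ)
    (hdiag : ∀ i : Fin N, a (fun _ => i) ≤ R)
    (lam : ℝ) (x : Fin N → ℝ) (hx : x ≠ 0)
    (heig : ∀ i : Fin N,
      ∑ t ∈ Finset.univ.filter (fun t : Fin m → Fin N => t ⟨0, by omega⟩ = i),
          a t * ∏ s ∈ Finset.univ.erase ⟨0, by omega⟩, x (t s)
        = lam * x i ^ (m - 1)) :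
    |lam| ≤ Δ + R := by
  obtain ⟨j, hj⟩ : ∃ j, x j ≠ 0 := by
    by_contra h; push_neg at h; exact hx (funext h)
  obtain ⟨i, -, hi⟩ := Finset.exists_max_image Finset.univ (fun k => |x k|) ⟨j, Finset.mem_univ j⟩
  set M := |x i| with hM
  have hxle : ∀ k, |x k| ≤ M := fun k => hi k (Finset.mem_univ k)
  have hMpos : 0 < M := lt_of_lt_of_le (abs_pos.mpr hj) (hxle j)
  have hcard : (Finset.univ.erase (⟨0, by omega⟩ : Fin m)).card = m - 1 := by
    rw [Finset.card_erase_of_mem (Finset.mem_univ _), Finset.card_univ, Fintype.card_fin]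
  have hprod : ∀ t : Fin m → Fin N,
      |∏ s ∈ Finset.univ.erase (⟨0, by omega⟩ : Fin m), x (t s)| ≤ M ^ (m - 1) := by
    intro t
    rw [Finset.abs_prod]
    calc ∏ s ∈ Finset.univ.erase (⟨0, by omega⟩ : Fin m), |x (t s)|
        ≤ ∏ _s ∈ Finset.univ.erase (⟨0, by omega⟩ : Fin m), M :=
          Finset.prod_le_prod (fun s _ => abs_nonneg _) (fun s _ => hxle _)
      _ = M ^ (m - 1) := by rw [Finset.prod_const, hcard]
  have hMpow : 0 < M ^ (m - 1) := pow_pos hMpos _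
  have hsplit : (Finset.univ.filter (fun t : Fin m → Fin N => t ⟨0, by omega⟩ = i))
      = insert (fun _ => i)
        (Finset.univ.filter (fun t : Fin m → Fin N => t ⟨0, by omega⟩ = i ∧ t ≠ fun _ => i)) := by
    ext t
    simp only [Finset.mem_insert, Finset.mem_filter, Finset.mem_univ, true_and]
    constructor
    · intro h
      by_cases hc : t = fun _ => i
      · exact Or.inl hc
      · exact Or.inr ⟨h, hc⟩
    · rintro (rfl | ⟨h, -⟩)
      · rfl
      · exact h
  have hnotmem : (fun _ => i) ∉
      (Finset.univ.filter (fun t : Fin m → Fin N => t ⟨0, by omega⟩ = i ∧ t ≠ fun _ => i)) := by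
    simp
  have key : |lam| * M ^ (m - 1) ≤ (Δ + R) * M ^ (m - 1) := by
    have h1 : |lam| * M ^ (m - 1) = |lam * x i ^ (m - 1)| := by
      rw [abs_mul, abs_pow]
    rw [h1, ← heig i]
    calc |∑ t ∈ Finset.univ.filter (fun t : Fin m → Fin N => t ⟨0, by omega⟩ = i),
            a t * ∏ s ∈ Finset.univ.erase (⟨0, by omega⟩ : Fin m), x (t s)|
        ≤ ∑ t ∈ Finset.univ.filter (fun t : Fin m → Fin N => t ⟨0, by omega⟩ = i),
            |a t * ∏ s ∈ Finset.univ.erase (⟨0, by omega⟩ : Fin m), x (t s)| :=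
          Finset.abs_sum_le_sum_abs _ _
      _ ≤ ∑ t ∈ Finset.univ.filter (fun t : Fin m → Fin N => t ⟨0, by omega⟩ = i),
            a t * M ^ (m - 1) := by
          refine Finset.sum_le_sum fun t _ => ?_
          rw [abs_mul, abs_of_nonneg (ha t)]
          exact mul_le_mul_of_nonneg_left (hprod t) (ha t)
      _ = a (fun _ => i) * M ^ (m - 1)
          + ∑ t ∈ Finset.univ.filter
              (fun t : Fin m → Fin N => t ⟨0, by omega⟩ = i ∧ t ≠ fun _ => i),
            a t * M ^ (m - 1) := by
          rw [hsplit, Finset.sum_insert hnotmem]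
      _ ≤ R * M ^ (m - 1) + Δ * M ^ (m - 1) := by
          gcongr
          · exact hdiag i
          · rw [← Finset.sum_mul]
            exact mul_le_mul_of_nonneg_right (hoff i) hMpow.le
      _ = (Δ + R) * M ^ (m - 1) := by ring
  exact le_of_mul_le_mul_right key hMpow
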